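/- arXiv:2412.21078 — 5 statements merged into one kernel-verified Lean document; each statement's English description precedes it below -/
import Mathlib

section
/- Let N ≥ 1, let F : 𝕊(N) → ℝ, let λ > 0 and h ∈ ℝ, and suppose that for all B, M ∈ 𝕊(N) with B ≤ M one has F(B) − F(M) ≥ λ·tr(M − B) + h. Then for all Y, M ∈ 𝕊(N) with −Y ≤ M: −F(Y) ≥ λ·λ_N(Y) + λ·λ₁(M) + h − F(−M), where λ₁ and λ_N denote the smallest and largest eigenvalue respectively. -/
/-!
Since `-Y ≤ M`, the matrix `Y + M` is positive semidefinite and the hypothesis gives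
`F(-M) - F(Y) ≥ λ tr(Y + M) + h`. It remains to see `λ_N(Y) + λ₁(M) ≤ tr(Y + M)`: conjugating by
the eigenvector unitary `U` of `Y` preserves the trace and positivity, so
`tr(Y + M) ≥ (Uᴴ(Y + M)U)ⱼⱼ = λⱼ(Y) + (UᴴMU)ⱼⱼ ≥ λⱼ(Y) + λ₁(M)` for every `j`.
-/

open Matrix

/-- The Loewner partial order on matrices: `X ≤ Y` iff `Y - X` is positive semidefinite. -/
def Loewner {n : Type*} [Fintype n] (X Y : Matrix n n ℝ) : Prop := (Y - X).PosSemidef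

/-- The eigenvalues of a real symmetric matrix, listed in increasing order. -/
noncomputable def eigs {N : ℕ} (X : Matrix (Fin N) (Fin N) ℝ) : Fin N → ℝ :=
  if h : X.IsHermitian then h.eigenvalues ∘ Tuple.sort h.eigenvalues else 0

/-- The smallest eigenvalue of a real symmetric matrix. -/
noncomputable def lam1 {N : ℕ} (X : Matrix (Fin N) (Fin N) ℝ) : ℝ := ⨅ i, eigs X i

/-- The largest eigenvalue of a real symmetric matrix. -/
noncomputable def lamN {N : ℕ} (X : Matrix (Fin N) (Fin N) ℝ) : ℝ := ⨆ i, eigs X i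

lemma lamN_eq_iSup_eigenvalues {N : ℕ} {X : Matrix (Fin N) (Fin N) ℝ} (hX : X.IsHermitian) :
    lamN X = ⨆ i, hX.eigenvalues i := by
  rw [lamN, eigs, dif_pos hX]
  exact (Tuple.sort hX.eigenvalues).iSup_comp (g := hX.eigenvalues)

lemma lam1_eq_iInf_eigenvalues {N : ℕ} {X : Matrix (Fin N) (Fin N) ℝ} (hX : X.IsHermitian) :
    lam1 X = ⨅ i, hX.eigenvalues i := by
  rw [lam1, eigs, dif_pos hX]
  exact (Tuple.sort hX.eigenvalues).iInf_comp (g := hX.eigenvalues)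

open scoped MatrixOrder in
lemma loewner_lam1_smul_one {N : ℕ} {M : Matrix (Fin N) (Fin N) ℝ} (hM : M.IsHermitian) :
    Loewner (lam1 M • 1) M := by
  rw [← Algebra.algebraMap_eq_smul_one]
  refine (algebraMap_le_iff_le_spectrum (a := M) hM.isSelfAdjoint).2 ?_
  rw [hM.spectrum_real_eq_range_eigenvalues, lam1_eq_iInf_eigenvalues hM]
  rintro _ ⟨i, rfl⟩
  exact ciInf_le (Set.finite_range _).bddBelow i

section Conjugation

variable {n : Type*} [Fintype n]

lemma Matrix.PosSemidef.diag_le_trace {A : Matrix n n ℝ} (hA : A.PosSemidef) (i : n) :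
    A i i ≤ A.trace :=
  Finset.single_le_sum (f := fun j => A j j) (fun _ _ => hA.diag_nonneg) (Finset.mem_univ i)

variable [DecidableEq n] {U : Matrix n n ℝ}

lemma trace_star_mul_mul_of_mem_unitary (hU : U ∈ unitary (Matrix n n ℝ)) (A : Matrix n n ℝ) :
    (star U * A * U).trace = A.trace := by
  rw [trace_mul_cycle, Unitary.mul_star_self_of_mem hU, one_mul]

lemma le_diag_star_mul_mul_of_mem_unitary (hU : U ∈ unitary (Matrix n n ℝ)) {c : ℝ}
    {M : Matrix n n ℝ} (hM : Loewner (c • 1) M) (i : n) :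
    c ≤ (star U * M * U) i i := by
  have h := (hM.conjTranspose_mul_mul_same U).diag_nonneg (i := i)
  rw [← star_eq_conjTranspose, mul_sub, sub_mul, Matrix.mul_smul, Matrix.smul_mul, mul_one,
    Unitary.star_mul_self_of_mem hU] at h
  simpa using h

lemma Matrix.IsHermitian.eigenvalues_add_le_trace {Y M : Matrix n n ℝ} (hY : Y.IsHermitian)
    (hYM : (Y + M).PosSemidef) {c : ℝ} (hM : Loewner (c • 1) M) (j : n) :
    hY.eigenvalues j + c ≤ (Y + M).trace := by
  set V : Matrix n n ℝ := ↑hY.eigenvectorUnitary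
  have hV : V ∈ unitary (Matrix n n ℝ) := hY.eigenvectorUnitary.2
  have hdiag : star V * Y * V = diagonal hY.eigenvalues := by
    simpa using hY.conjStarAlgAut_star_eigenvectorUnitary
  calc hY.eigenvalues j + c ≤ (star V * Y * V) j j + (star V * M * V) j j := by
        rw [hdiag, diagonal_apply_eq]
        exact (add_le_add_iff_left _).2 (le_diag_star_mul_mul_of_mem_unitary hV hM j)
    _ = (star V * (Y + M) * V) j j := by rw [mul_add, add_mul, Matrix.add_apply]
    _ ≤ (star V * (Y + M) * V).trace := (hYM.conjTranspose_mul_mul_same V).diag_le_trace j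
    _ = (Y + M).trace := trace_star_mul_mul_of_mem_unitary hV _

end Conjugation

lemma lamN_add_lam1_le_trace {N : ℕ} {Y M : Matrix (Fin N) (Fin N) ℝ} (hY : Y.IsHermitian)
    (hM : M.IsHermitian) (hYM : (Y + M).PosSemidef) : lamN Y + lam1 M ≤ (Y + M).trace := by
  rcases isEmpty_or_nonempty (Fin N) with hN | hN
  · simp [lamN, lam1]
  rw [← le_sub_iff_add_le, lamN_eq_iSup_eigenvalues hY]
  exact ciSup_le fun j => le_sub_iff_add_le.2 <|
    hY.eigenvalues_add_le_trace hYM (loewner_lam1_smul_one hM) j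

theorem classU_subset_classM_supersolution_general {N : ℕ}
    (F : Matrix (Fin N) (Fin N) ℝ → ℝ) (lam h : ℝ) (hlam : 0 < lam)
    (hF : ∀ B M : Matrix (Fin N) (Fin N) ℝ, B.IsHermitian → M.IsHermitian →
      Loewner B M → F B - F M ≥ lam * (M - B).trace + h) :
    ∀ Y M : Matrix (Fin N) (Fin N) ℝ, Y.IsHermitian → M.IsHermitian → Loewner (-Y) M →
      -F Y ≥ lam * lamN Y + lam * lam1 M + h - F (-M) := by
  intro Y M hY hM hYM
  rw [Loewner, sub_neg_eq_add, add_comm] at hYM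
  have hF_YM := hF (-M) Y hM.neg hY (by rwa [Loewner, sub_neg_eq_add])
  rw [sub_neg_eq_add] at hF_YM
  have h_trace := mul_le_mul_of_nonneg_left (lamN_add_lam1_le_trace hY hM hYM) hlam.le
  linarith

/-- The supersolution half of "Class U ⊆ Class M". -/
theorem classU_subset_classM_supersolution {N : ℕ} (hN : 1 ≤ N)
    (F : Matrix (Fin N) (Fin N) ℝ → ℝ) (lam h : ℝ) (hlam : 0 < lam)
    (hF : ∀ B M : Matrix (Fin N) (Fin N) ℝ, B.IsHermitian → M.IsHermitian →
      Loewner B M → F B - F M ≥ lam * (M - B).trace + h) :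
    ∀ Y M : Matrix (Fin N) (Fin N) ℝ, Y.IsHermitian → M.IsHermitian → Loewner (-Y) M →
      -F Y ≥ lam * lamN Y + lam * lam1 M + h - F (-M) :=
  classU_subset_classM_supersolution_general F lam h hlam hF
end

section
/- Let Ω ⊆ ℝᴺ, let 𝒟 ⊆ Ω × ℝ × ℝᴺ × 𝕊(N), and let F : 𝒟 → ℝ be of Class M. Let u, v : Ω → ℝ satisfy: F(x, u(x), p, X) ≤ 0 whenever x ∈ Ω, (p, X) ∈ cl J^{2,+}(u, x), and (x, u(x), p, X) ∈ 𝒟; and F(y, v(y), q, Y) ≥ 0 whenever y ∈ Ω, (q, Y) ∈ cl J^{2,−}(v, y), and (y, v(y), q, Y) ∈ 𝒟. Fix x̂, ŷ ∈ Ω, p, q ∈ ℝᴺ, and a symmetric 2N×2N matrix A with block form A = [[E, B], [Bᵀ, D]] where E, D ∈ 𝕊(N). Set Ẽ = E² + B·Bᵀ, D̃ = D² + Bᵀ·B, 𝒮₁ = {E + εẼ : ε ≥ 0}, 𝒮₂ = {D + εD̃ : ε ≥ 0}, ω₁ = (x̂, u(x̂), p), ω₂ = (ŷ, v(ŷ),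 q). Assume {ω₁} × 𝒮₁ ⊆ 𝒟 and {ω₂} × 𝒮₂ ⊆ 𝒟, and assume that for every ε > 0 there exist X_ε, Y_ε ∈ 𝕊(N) with (p, X_ε) ∈ cl J^{2,+}(u, x̂), (q, Y_ε) ∈ cl J^{2,−}(v, ŷ), (x̂, u(x̂), p, X_ε) ∈ 𝒟, (ŷ, v(ŷ), q, Y_ε) ∈ 𝒟, and −(1/ε + ‖A‖)·I_{2N} ≤ [[X_ε, 0], [0, −Y_ε]] ≤ A + ε·A² (Loewner order on symmetric 2N×2N matrices). Then there exist X, Y ∈ 𝕊(N) with (p, X) ∈ cl J^{2,+}(u, x̂), (q, Y) ∈ cl J^{2,−}(v, ŷ), [[X, 0], [0, −Y]] ≤ A, and there exist functions g₁ : ℝ × 𝒮₁ → ℝ and g₂ : ℝ × 𝒮₂ → ℝ satisfying conditions (1)–(4) of the Class M definition for ω₁ (respectively ω₂) such that g₁(·, E)⁻¹(0)·I ≤ X and −g₂(·, D)⁻¹(0)·I ≤ −Y. -/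
open Matrix Filter
open scoped RealInnerProductSpace Topology

/-- The operator norm of a symmetric matrix: the largest absolute value of an eigenvalue. -/
noncomputable def matOpNorm {n : Type*} [Fintype n] [DecidableEq n] (A : Matrix n n ℝ) : ℝ :=
  if h : A.IsHermitian then ⨆ i, |h.eigenvalues i| else 0

/-- The quadratic form `⟨X v, v⟩` of a matrix `X` at a vector `v` of Euclidean space. -/
noncomputable def matQuad {N : ℕ} (X : Matrix (Fin N) (Fin N) ℝ)
    (v : EuclideanSpace ℝ (Fin N)) : ℝ :=
  X.mulVec ((WithLp.equiv 2 (Fin N → ℝ)) v) ⬝ᵥ (WithLp.equiv 2 (Fin N → ℝ)) v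

/-- The second-order superjet `J^{2,+}(u, x)` relative to `Ω`. -/
def Superjet {N : ℕ} (Ω : Set (EuclideanSpace ℝ (Fin N))) (u : EuclideanSpace ℝ (Fin N) → ℝ)
    (x : EuclideanSpace ℝ (Fin N)) (p : EuclideanSpace ℝ (Fin N))
    (X : Matrix (Fin N) (Fin N) ℝ) : Prop :=
  ∀ ε : ℝ, 0 < ε → ∃ δ : ℝ, 0 < δ ∧ ∀ y ∈ Ω, ‖y - x‖ < δ →
    u y ≤ u x + ⟪p, y - x⟫ + (1 / 2) * matQuad X (y - x) + ε * ‖y - x‖ ^ 2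

/-- The second-order subjet `J^{2,−}(v, y)` relative to `Ω`. -/
def Subjet {N : ℕ} (Ω : Set (EuclideanSpace ℝ (Fin N))) (v : EuclideanSpace ℝ (Fin N) → ℝ)
    (x : EuclideanSpace ℝ (Fin N)) (q : EuclideanSpace ℝ (Fin N))
    (Y : Matrix (Fin N) (Fin N) ℝ) : Prop :=
  ∀ ε : ℝ, 0 < ε → ∃ δ : ℝ, 0 < δ ∧ ∀ y ∈ Ω, ‖y - x‖ < δ →
    v y ≥ v x + ⟪q, y - x⟫ + (1 / 2) * matQuad Y (y - x) - ε * ‖y - x‖ ^ 2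

/-- The jet closure `cl J^{2,+}(u, x)`. -/
def SuperjetClosure {N : ℕ} (Ω : Set (EuclideanSpace ℝ (Fin N)))
    (u : EuclideanSpace ℝ (Fin N) → ℝ) (x : EuclideanSpace ℝ (Fin N))
    (p : EuclideanSpace ℝ (Fin N)) (X : Matrix (Fin N) (Fin N) ℝ) : Prop :=
  ∃ (xs ps : ℕ → EuclideanSpace ℝ (Fin N)) (Xs : ℕ → Matrix (Fin N) (Fin N) ℝ),
    (∀ k, xs k ∈ Ω) ∧ (∀ k, Superjet Ω u (xs k) (ps k) (Xs k)) ∧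
    Tendsto xs atTop (𝓝 x) ∧ Tendsto (fun k => u (xs k)) atTop (𝓝 (u x)) ∧
    Tendsto ps atTop (𝓝 p) ∧ Tendsto Xs atTop (𝓝 X)

/-- The jet closure `cl J^{2,−}(v, y)`. -/
def SubjetClosure {N : ℕ} (Ω : Set (EuclideanSpace ℝ (Fin N)))
    (v : EuclideanSpace ℝ (Fin N) → ℝ) (x : EuclideanSpace ℝ (Fin N))
    (q : EuclideanSpace ℝ (Fin N)) (Y : Matrix (Fin N) (Fin N) ℝ) : Prop :=
  ∃ (xs qs : ℕ → EuclideanSpace ℝ (Fin N)) (Ys : ℕ → Matrix (Fin N) (Fin N) ℝ),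
    (∀ k, xs k ∈ Ω) ∧ (∀ k, Subjet Ω v (xs k) (qs k) (Ys k)) ∧
    Tendsto xs atTop (𝓝 x) ∧ Tendsto (fun k => v (xs k)) atTop (𝓝 (v x)) ∧
    Tendsto qs atTop (𝓝 q) ∧ Tendsto Ys atTop (𝓝 Y)

/-- Conditions (1)–(4) of the Class M definition for the function `g₁` at the point `ω`
on the set `𝒮₁ = S`, with `r M = g₁(·, M)⁻¹(0)`:
(1) for each `M ∈ S`, `t ↦ g₁(t, M)` is an increasing bijection of `ℝ` onto `ℝ`;
(2) `M ↦ g₁(·, M)⁻¹(0)` is continuous on `S` (encoded by the root function `r`);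
(3) for `(ω, X) ∈ 𝒟` and `M ∈ S`, `X ≤ M` implies `−F(ω, X) ≤ g₁(λ₁(X), M)`. -/
def ClassMWitness₁ {N : ℕ}
    (D : Set (EuclideanSpace ℝ (Fin N) × ℝ × EuclideanSpace ℝ (Fin N) ×
      Matrix (Fin N) (Fin N) ℝ))
    (F : EuclideanSpace ℝ (Fin N) × ℝ × EuclideanSpace ℝ (Fin N) ×
      Matrix (Fin N) (Fin N) ℝ → ℝ)
    (ω : EuclideanSpace ℝ (Fin N) × ℝ × EuclideanSpace ℝ (Fin N))
    (S : Set (Matrix (Fin N) (Fin N) ℝ))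
    (g : ℝ → Matrix (Fin N) (Fin N) ℝ → ℝ) (r : Matrix (Fin N) (Fin N) ℝ → ℝ) : Prop :=
  (∀ M ∈ S, StrictMono (fun t => g t M) ∧ Function.Bijective (fun t => g t M)) ∧
  (∀ M ∈ S, g (r M) M = 0) ∧
  ContinuousOn r S ∧
  (∀ X : Matrix (Fin N) (Fin N) ℝ, (ω.1, ω.2.1, ω.2.2, X) ∈ D →
    ∀ M ∈ S, Loewner X M → -F (ω.1, ω.2.1, ω.2.2, X) ≤ g (lam1 X) M)

/-- Conditions (1)–(4) of the Class M definition for the function `g₂` at the point `ω`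
on the set `𝒮₂ = S`, with `r M = g₂(·, M)⁻¹(0)`:
(1) for each `M ∈ S`, `t ↦ g₂(t, M)` is an increasing bijection of `ℝ` onto `ℝ`;
(2) `M ↦ g₂(·, M)⁻¹(0)` is continuous on `S` (encoded by the root function `r`);
(4) for `(ω, Y) ∈ 𝒟` and `M ∈ S`, `−Y ≤ M` implies `−F(ω, Y) ≥ g₂(λ_N(Y), M)`. -/
def ClassMWitness₂ {N : ℕ}
    (D : Set (EuclideanSpace ℝ (Fin N) × ℝ × EuclideanSpace ℝ (Fin N) ×
      Matrix (Fin N) (Fin N) ℝ))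
    (F : EuclideanSpace ℝ (Fin N) × ℝ × EuclideanSpace ℝ (Fin N) ×
      Matrix (Fin N) (Fin N) ℝ → ℝ)
    (ω : EuclideanSpace ℝ (Fin N) × ℝ × EuclideanSpace ℝ (Fin N))
    (S : Set (Matrix (Fin N) (Fin N) ℝ))
    (g : ℝ → Matrix (Fin N) (Fin N) ℝ → ℝ) (r : Matrix (Fin N) (Fin N) ℝ → ℝ) : Prop :=
  (∀ M ∈ S, StrictMono (fun t => g t M) ∧ Function.Bijective (fun t => g t M)) ∧
  (∀ M ∈ S, g (r M) M = 0) ∧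
  ContinuousOn r S ∧
  (∀ Y : Matrix (Fin N) (Fin N) ℝ, (ω.1, ω.2.1, ω.2.2, Y) ∈ D →
    ∀ M ∈ S, Loewner (-Y) M → -F (ω.1, ω.2.1, ω.2.2, Y) ≥ g (lamN Y) M)

/-- A function `F : 𝒟 → ℝ`, `𝒟 ⊆ Ω × ℝ × ℝᴺ × 𝕊(N)`, is of **Class M** if it is continuous
in its matrix entry and, for every `ω ∈ Ω × ℝ × ℝᴺ` and all `𝒮₁, 𝒮₂ ⊆ 𝕊(N)` with
`{ω} × 𝒮ᵢ ⊆ 𝒟`, there exist `g₁, g₂` satisfying conditions (1)–(4). -/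
def ClassM {N : ℕ} (Ω : Set (EuclideanSpace ℝ (Fin N)))
    (D : Set (EuclideanSpace ℝ (Fin N) × ℝ × EuclideanSpace ℝ (Fin N) ×
      Matrix (Fin N) (Fin N) ℝ))
    (F : EuclideanSpace ℝ (Fin N) × ℝ × EuclideanSpace ℝ (Fin N) ×
      Matrix (Fin N) (Fin N) ℝ → ℝ) : Prop :=
  (∀ ω : EuclideanSpace ℝ (Fin N) × ℝ × EuclideanSpace ℝ (Fin N),
    ContinuousOn (fun X : Matrix (Fin N) (Fin N) ℝ => F (ω.1, ω.2.1, ω.2.2, X))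
      {X | (ω.1, ω.2.1, ω.2.2, X) ∈ D}) ∧
  (∀ ω : EuclideanSpace ℝ (Fin N) × ℝ × EuclideanSpace ℝ (Fin N), ω.1 ∈ Ω →
    ∀ S₁ S₂ : Set (Matrix (Fin N) (Fin N) ℝ),
      (∀ M ∈ S₁, M.IsHermitian) → (∀ M ∈ S₂, M.IsHermitian) →
      (∀ M ∈ S₁, (ω.1, ω.2.1, ω.2.2, M) ∈ D) → (∀ M ∈ S₂, (ω.1, ω.2.1, ω.2.2, M) ∈ D) →
      ∃ (g₁ g₂ : ℝ → Matrix (Fin N) (Fin N) ℝ → ℝ)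
        (r₁ r₂ : Matrix (Fin N) (Fin N) ℝ → ℝ),
        ClassMWitness₁ D F ω S₁ g₁ r₁ ∧ ClassMWitness₂ D F ω S₂ g₂ r₂)

/-!
Take `ε = 1 / (k + 1)`. The diagonal blocks of `A + ε A²` are `E + ε Ẽ ∈ 𝒮₁` and
`D + ε D̃ ∈ 𝒮₂`, so `X_ε ≤ E + ε Ẽ` and `-Y_ε ≤ D + ε D̃`. Since `F ≤ 0` at `X_ε`, condition (3)
and the monotonicity of `g₁` give `g₁(·, E + ε Ẽ)⁻¹(0) ≤ λ₁(X_ε)`, and symmetrically for `Y_ε`.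
Hence `X_ε` and `-Y_ε` are squeezed in the Loewner order between matrices that converge as
`ε → 0` (the roots by condition (2)), so they stay in a compact set. Along an ultrafilter they
converge, and every required property is closed: jet closures are closed sets, and Loewner
inequalities pass to the limit.
-/

namespace Matrix

variable {n : Type*}

theorem PosSemidef.two_mul_abs_apply_le [Fintype n] {P : Matrix n n ℝ} (hP : P.PosSemidef)
    (i j : n) : 2 * |P i j| ≤ P i i + P j j := by
  classical
  have key (s : ℝ) : 0 ≤ P i i + s * (P i j + P j i) + s ^ 2 * P j j := by
    have := hP.dotProduct_mulVec_nonneg (Pi.single i 1 + Pi.single j s)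
    simp only [star_trivial, mulVec_add, mulVec_single, MulOpposite.op_one, one_smul,
      op_smul_eq_smul, dotProduct_add, add_dotProduct, single_dotProduct, col_apply, one_mul,
      dotProduct_smul, smul_eq_mul] at this
    linarith
  have hsym : P j i = P i j := by simpa using hP.1.apply i j
  have hpos := key 1
  have hneg := key (-1)
  rw [hsym] at hpos hneg
  cases abs_cases (P i j) <;> nlinarith

theorem PosSemidef.abs_apply_le_trace [Fintype n] {P : Matrix n n ℝ} (hP : P.PosSemidef)
    (i j : n) : |P i j| ≤ P.trace := by
  have hdiag (k : n) : P k k ≤ P.trace :=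
    Finset.single_le_sum (f := P.diag) (fun k _ => hP.diag_nonneg) (Finset.mem_univ k)
  linarith [hP.two_mul_abs_apply_le i j, hdiag i, hdiag j]

theorem isClosed_setOf_posSemidef [Fintype n] : IsClosed {M : Matrix n n ℝ | M.PosSemidef} := by
  have : {M : Matrix n n ℝ | M.PosSemidef} =
      {M | Mᴴ = M} ∩ ⋂ x : n → ℝ, {M | 0 ≤ star x ⬝ᵥ M *ᵥ x} := by
    ext M
    simp [posSemidef_iff_dotProduct_mulVec, IsHermitian]
  rw [this]
  exact (isClosed_eq continuous_id.matrix_conjTranspose continuous_id).inter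
    (isClosed_iInter fun x => isClosed_le continuous_const (by fun_prop))

theorem isCompact_setOf_abs_apply_le (R : ℝ) :
    IsCompact {P : Matrix n n ℝ | ∀ i j, |P i j| ≤ R} := by
  have h : {P : Matrix n n ℝ | ∀ i j, |P i j| ≤ R} =
      Set.univ.pi fun _ => Set.univ.pi fun _ => Set.Icc (-R) R := by
    ext P
    exact ⟨fun h i _ j _ => abs_le.1 (h i j), fun h i j => abs_le.2 (h i trivial j trivial)⟩
  rw [h]
  exact isCompact_univ_pi fun _ => isCompact_univ_pi fun _ => isCompact_Icc

-- `Matrix` is not reducible, so the instance for iterated function types is not found.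
instance {m R : Type*} [TopologicalSpace R] [FirstCountableTopology R] [Countable m]
    [Countable n] : FirstCountableTopology (Matrix m n R) :=
  inferInstanceAs (FirstCountableTopology (m → n → R))

end Matrix

section Loewner

variable {ι m n : Type*} [Fintype m] [Fintype n]

theorem Loewner.of_tendsto {l : Filter ι} [l.NeBot] {X Y : ι → Matrix n n ℝ}
    {X₀ Y₀ : Matrix n n ℝ} (hX : Tendsto X l (𝓝 X₀)) (hY : Tendsto Y l (𝓝 Y₀))
    (h : ∀ᶠ k in l, Loewner (X k) (Y k)) : Loewner X₀ Y₀ :=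
  isClosed_setOf_posSemidef.mem_of_tendsto (hY.sub hX) h

theorem Loewner.trace_le {X Y : Matrix n n ℝ} (h : Loewner X Y) : X.trace ≤ Y.trace := by
  simpa [trace_sub] using h.trace_nonneg

theorem Loewner.isHermitian_of_smul_one [DecidableEq n] {c : ℝ} {X : Matrix n n ℝ}
    (h : Loewner (c • 1) X) : X.IsHermitian := by
  simpa using h.isHermitian.add (isHermitian_one.smul (IsSelfAdjoint.all c))

theorem Loewner.toBlocks₁₁ {P Q : Matrix (m ⊕ n) (m ⊕ n) ℝ} (h : Loewner P Q) :
    Loewner P.toBlocks₁₁ Q.toBlocks₁₁ :=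
  h.submatrix Sum.inl

theorem Loewner.toBlocks₂₂ {P Q : Matrix (m ⊕ n) (m ⊕ n) ℝ} (h : Loewner P Q) :
    Loewner P.toBlocks₂₂ Q.toBlocks₂₂ :=
  h.submatrix Sum.inr

theorem exists_tendsto_of_loewner_between (l : Ultrafilter ι) {L U X : ι → Matrix n n ℝ}
    {L₀ U₀ : Matrix n n ℝ} (hL : Tendsto L l (𝓝 L₀)) (hU : Tendsto U l (𝓝 U₀))
    (hLX : ∀ k, Loewner (L k) (X k)) (hXU : ∀ k, Loewner (X k) (U k)) :
    ∃ X₀, Tendsto X l (𝓝 X₀) := by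
  set R := (U₀ - L₀).trace + 1
  have htrace : ∀ᶠ k in l, (U k - L k).trace ≤ R :=
    ((continuous_id.matrix_trace.tendsto _).comp (hU.sub hL)).eventually_le_const
      (lt_add_one _)
  have hbox : ∀ᶠ k in l, X k - L k ∈ {P : Matrix n n ℝ | ∀ i j, |P i j| ≤ R} := by
    filter_upwards [htrace] with k hk i j
    have hle : (X k - L k).trace ≤ (U k - L k).trace := by
      simpa using (hXU k).trace_le
    exact ((hLX k).abs_apply_le_trace i j).trans (hle.trans hk)
  obtain ⟨P₀, -, hP₀⟩ :=
    (isCompact_setOf_abs_apply_le R).ultrafilter_le_nhds' (l.map fun k => X k - L k) hbox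
  have hP₀ : Tendsto (fun k => X k - L k) l (𝓝 P₀) := hP₀
  exact ⟨P₀ + L₀, by simpa using hP₀.add hL⟩

end Loewner

section Blocks

variable {m n : Type*} [Fintype m] [Fintype n] [DecidableEq m] [DecidableEq n]
  (E : Matrix m m ℝ) (B : Matrix m n ℝ) (C : Matrix n m ℝ) (D : Matrix n n ℝ) (ε : ℝ)

theorem toBlocks₁₁_add_smul_sq :
    (fromBlocks E B C D + ε • fromBlocks E B C D ^ 2).toBlocks₁₁ = E + ε • (E ^ 2 + B * C) := by
  simp [pow_two, fromBlocks_multiply, fromBlocks_smul, fromBlocks_add]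

theorem toBlocks₂₂_add_smul_sq :
    (fromBlocks E B C D + ε • fromBlocks E B C D ^ 2).toBlocks₂₂ = D + ε • (D ^ 2 + C * B) := by
  simp [pow_two, fromBlocks_multiply, fromBlocks_smul, fromBlocks_add, add_comm]

end Blocks

section Eigenvalues

variable {N : ℕ} {X : Matrix (Fin N) (Fin N) ℝ}

theorem lam1_le_eigenvalues (hX : X.IsHermitian) (i : Fin N) : lam1 X ≤ hX.eigenvalues i := by
  refine (ciInf_le (Set.finite_range (eigs X)).bddBelow
    ((Tuple.sort hX.eigenvalues)⁻¹ i)).trans_eq ?_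
  rw [eigs, dif_pos hX]
  simp

theorem eigenvalues_le_lamN (hX : X.IsHermitian) (i : Fin N) : hX.eigenvalues i ≤ lamN X := by
  refine le_of_eq_of_le ?_ (le_ciSup (Set.finite_range (eigs X)).bddAbove
    ((Tuple.sort hX.eigenvalues)⁻¹ i))
  rw [eigs, dif_pos hX]
  simp

open scoped MatrixOrder in
theorem loewner_smul_one_of_le_lam1 (hX : X.IsHermitian) {c : ℝ} (hc : c ≤ lam1 X) :
    Loewner (c • 1) X := by
  rw [← Algebra.algebraMap_eq_smul_one]
  refine (algebraMap_le_iff_le_spectrum hX.isSelfAdjoint).2 ?_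
  rw [hX.spectrum_real_eq_range_eigenvalues]
  rintro _ ⟨i, rfl⟩
  exact hc.trans (lam1_le_eigenvalues hX i)

open scoped MatrixOrder in
theorem loewner_smul_one_of_lamN_le (hX : X.IsHermitian) {c : ℝ} (hc : lamN X ≤ c) :
    Loewner X (c • 1) := by
  rw [← Algebra.algebraMap_eq_smul_one]
  refine (le_algebraMap_iff_spectrum_le hX.isSelfAdjoint).2 ?_
  rw [hX.spectrum_real_eq_range_eigenvalues]
  rintro _ ⟨i, rfl⟩
  exact (eigenvalues_le_lamN hX i).trans hc

end Eigenvalues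

section JetClosure

variable {α β γ : Type*} [TopologicalSpace α] [TopologicalSpace β] [TopologicalSpace γ]

def jetGraph (Ω : Set α) (u : α → ℝ) (J : α → β → γ → Prop) : Set (α × ℝ × β × γ) :=
  {w | w.1 ∈ Ω ∧ u w.1 = w.2.1 ∧ J w.1 w.2.2.1 w.2.2.2}

theorem mem_closure_jetGraph_iff [FirstCountableTopology α] [FirstCountableTopology β]
    [FirstCountableTopology γ] {Ω : Set α} {u : α → ℝ} {J : α → β → γ → Prop} {x : α} {p : β}
    {X : γ} :
    (x, u x, p, X) ∈ closure (jetGraph Ω u J) ↔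
      ∃ (xs : ℕ → α) (ps : ℕ → β) (Xs : ℕ → γ), (∀ k, xs k ∈ Ω) ∧
        (∀ k, J (xs k) (ps k) (Xs k)) ∧ Tendsto xs atTop (𝓝 x) ∧
        Tendsto (fun k => u (xs k)) atTop (𝓝 (u x)) ∧ Tendsto ps atTop (𝓝 p) ∧
        Tendsto Xs atTop (𝓝 X) := by
  rw [mem_closure_iff_seq_limit]
  constructor
  · rintro ⟨w, hw, hlim⟩
    have hu : (fun k => u (w k).1) = fun k => (w k).2.1 := funext fun k => (hw k).2.1
    exact ⟨fun k => (w k).1, fun k => (w k).2.2.1, fun k => (w k).2.2.2, fun k => (hw k).1,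
      fun k => (hw k).2.2, hlim.fst_nhds, hu ▸ hlim.snd_nhds.fst_nhds,
      hlim.snd_nhds.snd_nhds.fst_nhds, hlim.snd_nhds.snd_nhds.snd_nhds⟩
  · rintro ⟨xs, ps, Xs, hΩ, hJ, hx, hu, hp, hX⟩
    exact ⟨fun k => (xs k, u (xs k), ps k, Xs k), fun k => ⟨hΩ k, rfl, hJ k⟩,
      hx.prodMk_nhds (hu.prodMk_nhds (hp.prodMk_nhds hX))⟩

end JetClosure

section Jets

variable {N : ℕ} (Ω : Set (EuclideanSpace ℝ (Fin N))) (u : EuclideanSpace ℝ (Fin N) → ℝ)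
  (x p : EuclideanSpace ℝ (Fin N))

theorem isClosed_setOf_superjetClosure : IsClosed {X | SuperjetClosure Ω u x p X} := by
  have h := (isClosed_closure (s := jetGraph Ω u (Superjet Ω u))).preimage
    (f := fun X : Matrix (Fin N) (Fin N) ℝ => (x, u x, p, X)) (by fun_prop)
  simp only [Set.preimage, mem_closure_jetGraph_iff] at h
  exact h

theorem isClosed_setOf_subjetClosure : IsClosed {X | SubjetClosure Ω u x p X} := by
  have h := (isClosed_closure (s := jetGraph Ω u (Subjet Ω u))).preimage
    (f := fun X : Matrix (Fin N) (Fin N) ℝ => (x, u x, p, X)) (by fun_prop)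
  simp only [Set.preimage, mem_closure_jetGraph_iff] at h
  exact h

end Jets

theorem Filter.Tendsto.const_add_smul {ι M : Type*} [TopologicalSpace M] [AddCommGroup M]
    [Module ℝ M] [ContinuousAdd M] [ContinuousSMul ℝ M] {l : Filter ι} {ε : ι → ℝ}
    (hε : Tendsto ε l (𝓝 0)) (E T : M) : Tendsto (fun k => E + ε k • T) l (𝓝 E) := by
  simpa using tendsto_const_nhds.add (hε.smul_const T)

theorem Filter.Tendsto.matrix_fromBlocks {ι l m n o R : Type*} [TopologicalSpace R]
    {f : Filter ι} {A : ι → Matrix n l R} {B : ι → Matrix n m R} {C : ι → Matrix o l R}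
    {D : ι → Matrix o m R} {A₀ : Matrix n l R} {B₀ : Matrix n m R} {C₀ : Matrix o l R}
    {D₀ : Matrix o m R} (hA : Tendsto A f (𝓝 A₀)) (hB : Tendsto B f (𝓝 B₀))
    (hC : Tendsto C f (𝓝 C₀)) (hD : Tendsto D f (𝓝 D₀)) :
    Tendsto (fun k => fromBlocks (A k) (B k) (C k) (D k)) f (𝓝 (fromBlocks A₀ B₀ C₀ D₀)) :=
  ((continuous_fst.matrix_fromBlocks continuous_snd.fst continuous_snd.snd.fst
    continuous_snd.snd.snd).tendsto (A₀, B₀, C₀, D₀)).comp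
      (hA.prodMk_nhds (hB.prodMk_nhds (hC.prodMk_nhds hD)))

section ClassM

variable {N : ℕ}
  {D : Set (EuclideanSpace ℝ (Fin N) × ℝ × EuclideanSpace ℝ (Fin N) × Matrix (Fin N) (Fin N) ℝ)}
  {F : EuclideanSpace ℝ (Fin N) × ℝ × EuclideanSpace ℝ (Fin N) × Matrix (Fin N) (Fin N) ℝ → ℝ}
  {ω : EuclideanSpace ℝ (Fin N) × ℝ × EuclideanSpace ℝ (Fin N)}
  {S : Set (Matrix (Fin N) (Fin N) ℝ)} {g : ℝ → Matrix (Fin N) (Fin N) ℝ → ℝ}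
  {r : Matrix (Fin N) (Fin N) ℝ → ℝ} {M : Matrix (Fin N) (Fin N) ℝ}

theorem ClassMWitness₁.root_le_lam1 (hW : ClassMWitness₁ D F ω S g r) (hM : M ∈ S)
    {X : Matrix (Fin N) (Fin N) ℝ} (hXD : (ω.1, ω.2.1, ω.2.2, X) ∈ D)
    (hF : F (ω.1, ω.2.1, ω.2.2, X) ≤ 0) (hXM : Loewner X M) : r M ≤ lam1 X := by
  refine (hW.1 M hM).1.le_iff_le.1 ?_
  simp only [hW.2.1 M hM]
  linarith [hW.2.2.2 X hXD M hM hXM]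

theorem ClassMWitness₂.lamN_le_root (hW : ClassMWitness₂ D F ω S g r) (hM : M ∈ S)
    {Y : Matrix (Fin N) (Fin N) ℝ} (hYD : (ω.1, ω.2.1, ω.2.2, Y) ∈ D)
    (hF : 0 ≤ F (ω.1, ω.2.1, ω.2.2, Y)) (hYM : Loewner (-Y) M) : lamN Y ≤ r M := by
  refine (hW.1 M hM).1.le_iff_le.1 ?_
  simp only [hW.2.1 M hM]
  linarith [hW.2.2.2 Y hYD M hM hYM]

variable {ι : Type*} (l : Ultrafilter ι) {Ms : ι → Matrix (Fin N) (Fin N) ℝ}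

theorem ClassMWitness₁.exists_tendsto (hW : ClassMWitness₁ D F ω S g r)
    (hMs : ∀ k, Ms k ∈ S) (hM : M ∈ S) (hMs_lim : Tendsto Ms l (𝓝 M))
    {X : ι → Matrix (Fin N) (Fin N) ℝ} (hX : ∀ k, (X k).IsHermitian)
    (hXD : ∀ k, (ω.1, ω.2.1, ω.2.2, X k) ∈ D) (hF : ∀ k, F (ω.1, ω.2.1, ω.2.2, X k) ≤ 0)
    (hXM : ∀ k, Loewner (X k) (Ms k)) :
    ∃ X₀, Tendsto X l (𝓝 X₀) ∧ Loewner (r M • 1) X₀ := by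
  have hlow (k : ι) : Loewner (r (Ms k) • 1) (X k) :=
    loewner_smul_one_of_le_lam1 (hX k) (hW.root_le_lam1 (hMs k) (hXD k) (hF k) (hXM k))
  have hr : Tendsto (fun k => r (Ms k) • (1 : Matrix (Fin N) (Fin N) ℝ)) l (𝓝 (r M • 1)) :=
    ((hW.2.2.1 M hM).tendsto.comp
      (tendsto_nhdsWithin_iff.2 ⟨hMs_lim, .of_forall hMs⟩)).smul_const 1
  obtain ⟨X₀, hX₀⟩ := exists_tendsto_of_loewner_between l hr hMs_lim hlow hXM
  exact ⟨X₀, hX₀, Loewner.of_tendsto hr hX₀ (.of_forall hlow)⟩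

theorem ClassMWitness₂.exists_tendsto (hW : ClassMWitness₂ D F ω S g r)
    (hMs : ∀ k, Ms k ∈ S) (hM : M ∈ S) (hMs_lim : Tendsto Ms l (𝓝 M))
    {Y : ι → Matrix (Fin N) (Fin N) ℝ} (hY : ∀ k, (Y k).IsHermitian)
    (hYD : ∀ k, (ω.1, ω.2.1, ω.2.2, Y k) ∈ D) (hF : ∀ k, 0 ≤ F (ω.1, ω.2.1, ω.2.2, Y k))
    (hYM : ∀ k, Loewner (-Y k) (Ms k)) :
    ∃ Y₀, Tendsto Y l (𝓝 Y₀) ∧ Loewner ((-r M) • 1) (-Y₀) := by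
  have hlow (k : ι) : Loewner ((-r (Ms k)) • 1) (-Y k) := by
    have h := loewner_smul_one_of_lamN_le (hY k)
      (hW.lamN_le_root (hMs k) (hYD k) (hF k) (hYM k))
    simpa [Loewner, neg_smul, sub_eq_add_neg, add_comm] using h
  have hr : Tendsto (fun k => (-r (Ms k)) • (1 : Matrix (Fin N) (Fin N) ℝ)) l
      (𝓝 ((-r M) • 1)) :=
    ((hW.2.2.1 M hM).tendsto.comp
      (tendsto_nhdsWithin_iff.2 ⟨hMs_lim, .of_forall hMs⟩)).neg.smul_const 1
  obtain ⟨W₀, hW₀⟩ := exists_tendsto_of_loewner_between l hr hMs_lim hlow hYM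
  refine ⟨-W₀, by simpa using hW₀.neg, ?_⟩
  simpa using Loewner.of_tendsto hr hW₀ (.of_forall hlow)

end ClassM

theorem classM_theorem_of_sums_general {N : ℕ}
    (Ω : Set (EuclideanSpace ℝ (Fin N)))
    (D : Set (EuclideanSpace ℝ (Fin N) × ℝ × EuclideanSpace ℝ (Fin N) ×
      Matrix (Fin N) (Fin N) ℝ))
    (hD : ∀ w ∈ D, w.1 ∈ Ω ∧ (w.2.2.2).IsHermitian)
    (F : EuclideanSpace ℝ (Fin N) × ℝ × EuclideanSpace ℝ (Fin N) ×
      Matrix (Fin N) (Fin N) ℝ → ℝ)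
    (hFM : ClassM Ω D F)
    (u v : EuclideanSpace ℝ (Fin N) → ℝ)
    (hu : ∀ x ∈ Ω, ∀ (p : EuclideanSpace ℝ (Fin N)) (X : Matrix (Fin N) (Fin N) ℝ),
      SuperjetClosure Ω u x p X → (x, u x, p, X) ∈ D → F (x, u x, p, X) ≤ 0)
    (hv : ∀ y ∈ Ω, ∀ (q : EuclideanSpace ℝ (Fin N)) (Y : Matrix (Fin N) (Fin N) ℝ),
      SubjetClosure Ω v y q Y → (y, v y, q, Y) ∈ D → 0 ≤ F (y, v y, q, Y))
    (xh yh : EuclideanSpace ℝ (Fin N)) (hxh : xh ∈ Ω) (hyh : yh ∈ Ω)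
    (p q : EuclideanSpace ℝ (Fin N))
    (E₀ D₀ B₀ : Matrix (Fin N) (Fin N) ℝ)
    (A : Matrix (Fin N ⊕ Fin N) (Fin N ⊕ Fin N) ℝ) (hA : A = Matrix.fromBlocks E₀ B₀ B₀ᵀ D₀)
    (Et Dt : Matrix (Fin N) (Fin N) ℝ)
    (hEt : Et = E₀ ^ 2 + B₀ * B₀ᵀ) (hDt : Dt = D₀ ^ 2 + B₀ᵀ * B₀)
    (S₁ S₂ : Set (Matrix (Fin N) (Fin N) ℝ))
    (hS₁ : S₁ = {M | ∃ ε : ℝ, 0 ≤ ε ∧ M = E₀ + ε • Et})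
    (hS₂ : S₂ = {M | ∃ ε : ℝ, 0 ≤ ε ∧ M = D₀ + ε • Dt})
    (hS₁D : ∀ M ∈ S₁, (xh, u xh, p, M) ∈ D)
    (hS₂D : ∀ M ∈ S₂, (yh, v yh, q, M) ∈ D)
    (hjets : ∀ ε : ℝ, 0 < ε → ∃ Xe Ye : Matrix (Fin N) (Fin N) ℝ,
      Xe.IsHermitian ∧ Ye.IsHermitian ∧
      SuperjetClosure Ω u xh p Xe ∧ SubjetClosure Ω v yh q Ye ∧
      (xh, u xh, p, Xe) ∈ D ∧ (yh, v yh, q, Ye) ∈ D ∧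
      Loewner ((-(1 / ε + matOpNorm A)) • (1 : Matrix (Fin N ⊕ Fin N) (Fin N ⊕ Fin N) ℝ))
        (Matrix.fromBlocks Xe 0 0 (-Ye)) ∧
      Loewner (Matrix.fromBlocks Xe 0 0 (-Ye)) (A + ε • A ^ 2)) :
    ∃ X Y : Matrix (Fin N) (Fin N) ℝ,
      X.IsHermitian ∧ Y.IsHermitian ∧
      SuperjetClosure Ω u xh p X ∧ SubjetClosure Ω v yh q Y ∧
      Loewner (Matrix.fromBlocks X 0 0 (-Y)) A ∧
      ∃ (g₁ g₂ : ℝ → Matrix (Fin N) (Fin N) ℝ → ℝ) (r₁ r₂ : Matrix (Fin N) (Fin N) ℝ → ℝ),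
        ClassMWitness₁ D F (xh, u xh, p) S₁ g₁ r₁ ∧
        ClassMWitness₂ D F (yh, v yh, q) S₂ g₂ r₂ ∧
        Loewner ((r₁ E₀) • (1 : Matrix (Fin N) (Fin N) ℝ)) X ∧
        Loewner ((-(r₂ D₀)) • (1 : Matrix (Fin N) (Fin N) ℝ)) (-Y) := by
  obtain ⟨g₁, -, r₁, -, hW₁, -⟩ := hFM.2 (xh, u xh, p) hxh S₁ ∅
    (fun M hM => (hD _ (hS₁D M hM)).2) (by simp) hS₁D (by simp)
  obtain ⟨-, g₂, -, r₂, -, hW₂⟩ := hFM.2 (yh, v yh, q) hyh ∅ S₂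
    (by simp) (fun M hM => (hD _ (hS₂D M hM)).2) (by simp) hS₂D
  choose X Y hX hY hXj hYj hXD hYD _ hXY using
    fun k : ℕ => hjets (1 / (k + 1)) Nat.one_div_pos_of_nat
  subst hA hEt hDt hS₁ hS₂
  let l := Ultrafilter.of (atTop : Filter ℕ)
  have hε : Tendsto (fun k : ℕ => 1 / ((k : ℝ) + 1)) l (𝓝 0) :=
    tendsto_one_div_add_atTop_nhds_zero_nat.mono_left (Ultrafilter.of_le _)
  obtain ⟨X₀, hX₀, hX₀r⟩ := hW₁.exists_tendsto l (fun k => ⟨_, by positivity, rfl⟩)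
    ⟨0, le_rfl, by simp⟩ (hε.const_add_smul _ _) hX hXD
    (fun k => hu xh hxh p _ (hXj k) (hXD k))
    (fun k => by simpa only [toBlocks₁₁_add_smul_sq, toBlocks_fromBlocks₁₁] using
      (hXY k).toBlocks₁₁)
  obtain ⟨Y₀, hY₀, hY₀r⟩ := hW₂.exists_tendsto l (fun k => ⟨_, by positivity, rfl⟩)
    ⟨0, le_rfl, by simp⟩ (hε.const_add_smul _ _) hY hYD
    (fun k => hv yh hyh q _ (hYj k) (hYD k))
    (fun k => by simpa only [toBlocks₂₂_add_smul_sq, toBlocks_fromBlocks₂₂] using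
      (hXY k).toBlocks₂₂)
  refine ⟨X₀, Y₀, hX₀r.isHermitian_of_smul_one,
    by simpa using hY₀r.isHermitian_of_smul_one.neg,
    (isClosed_setOf_superjetClosure Ω u xh p).mem_of_tendsto hX₀ (.of_forall hXj),
    (isClosed_setOf_subjetClosure Ω v yh q).mem_of_tendsto hY₀ (.of_forall hYj),
    Loewner.of_tendsto (hX₀.matrix_fromBlocks tendsto_const_nhds tendsto_const_nhds hY₀.neg)
      (hε.const_add_smul _ _) (.of_forall hXY),
    g₁, g₂, r₁, r₂, hW₁, hW₂, hX₀r, hY₀r⟩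

/-- The main theorem: removing the `εA²` term from the theorem of sums
for equations of Class M, with lower bounds `g₁(·, E)⁻¹(0)·I ≤ X` and
`−g₂(·, D)⁻¹(0)·I ≤ −Y`. -/
theorem classM_theorem_of_sums {N : ℕ}
    (Ω : Set (EuclideanSpace ℝ (Fin N)))
    (D : Set (EuclideanSpace ℝ (Fin N) × ℝ × EuclideanSpace ℝ (Fin N) ×
      Matrix (Fin N) (Fin N) ℝ))
    (hD : ∀ w ∈ D, w.1 ∈ Ω ∧ (w.2.2.2).IsHermitian)
    (F : EuclideanSpace ℝ (Fin N) × ℝ × EuclideanSpace ℝ (Fin N) ×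
      Matrix (Fin N) (Fin N) ℝ → ℝ)
    (hFM : ClassM Ω D F)
    (u v : EuclideanSpace ℝ (Fin N) → ℝ)
    (hu : ∀ x ∈ Ω, ∀ (p : EuclideanSpace ℝ (Fin N)) (X : Matrix (Fin N) (Fin N) ℝ),
      SuperjetClosure Ω u x p X → (x, u x, p, X) ∈ D → F (x, u x, p, X) ≤ 0)
    (hv : ∀ y ∈ Ω, ∀ (q : EuclideanSpace ℝ (Fin N)) (Y : Matrix (Fin N) (Fin N) ℝ),
      SubjetClosure Ω v y q Y → (y, v y, q, Y) ∈ D → 0 ≤ F (y, v y, q, Y))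
    (xh yh : EuclideanSpace ℝ (Fin N)) (hxh : xh ∈ Ω) (hyh : yh ∈ Ω)
    (p q : EuclideanSpace ℝ (Fin N))
    (E₀ D₀ B₀ : Matrix (Fin N) (Fin N) ℝ) (hE₀ : E₀.IsHermitian) (hD₀ : D₀.IsHermitian)
    (A : Matrix (Fin N ⊕ Fin N) (Fin N ⊕ Fin N) ℝ) (hA : A = Matrix.fromBlocks E₀ B₀ B₀ᵀ D₀)
    (Et Dt : Matrix (Fin N) (Fin N) ℝ)
    (hEt : Et = E₀ ^ 2 + B₀ * B₀ᵀ) (hDt : Dt = D₀ ^ 2 + B₀ᵀ * B₀)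
    (S₁ S₂ : Set (Matrix (Fin N) (Fin N) ℝ))
    (hS₁ : S₁ = {M | ∃ ε : ℝ, 0 ≤ ε ∧ M = E₀ + ε • Et})
    (hS₂ : S₂ = {M | ∃ ε : ℝ, 0 ≤ ε ∧ M = D₀ + ε • Dt})
    (hS₁D : ∀ M ∈ S₁, (xh, u xh, p, M) ∈ D)
    (hS₂D : ∀ M ∈ S₂, (yh, v yh, q, M) ∈ D)
    (hjets : ∀ ε : ℝ, 0 < ε → ∃ Xe Ye : Matrix (Fin N) (Fin N) ℝ,
      Xe.IsHermitian ∧ Ye.IsHermitian ∧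
      SuperjetClosure Ω u xh p Xe ∧ SubjetClosure Ω v yh q Ye ∧
      (xh, u xh, p, Xe) ∈ D ∧ (yh, v yh, q, Ye) ∈ D ∧
      Loewner ((-(1 / ε + matOpNorm A)) • (1 : Matrix (Fin N ⊕ Fin N) (Fin N ⊕ Fin N) ℝ))
        (Matrix.fromBlocks Xe 0 0 (-Ye)) ∧
      Loewner (Matrix.fromBlocks Xe 0 0 (-Ye)) (A + ε • A ^ 2)) :
    ∃ X Y : Matrix (Fin N) (Fin N) ℝ,
      X.IsHermitian ∧ Y.IsHermitian ∧
      SuperjetClosure Ω u xh p X ∧ SubjetClosure Ω v yh q Y ∧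
      Loewner (Matrix.fromBlocks X 0 0 (-Y)) A ∧
      ∃ (g₁ g₂ : ℝ → Matrix (Fin N) (Fin N) ℝ → ℝ) (r₁ r₂ : Matrix (Fin N) (Fin N) ℝ → ℝ),
        ClassMWitness₁ D F (xh, u xh, p) S₁ g₁ r₁ ∧
        ClassMWitness₂ D F (yh, v yh, q) S₂ g₂ r₂ ∧
        Loewner ((r₁ E₀) • (1 : Matrix (Fin N) (Fin N) ℝ)) X ∧
        Loewner ((-(r₂ D₀)) • (1 : Matrix (Fin N) (Fin N) ℝ)) (-Y) :=
  classM_theorem_of_sums_general Ω D hD F hFM u v hu hv xh yh hxh hyh p q E₀ D₀ B₀ A hA Et Dt hEt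
    hDt S₁ S₂ hS₁ hS₂ hS₁D hS₂D hjets
end

section
/- Let N ≥ 2 and let g : ℝ → ℝ be any function that is unbounded below on (−∞, 0] (for instance any increasing bijection of ℝ). Then there exists X ∈ 𝕊(N) with X ≤ I such that −F_∞(e₁, X) > g(λ₁(X)). (One may take X = diag(1, 0, …, 0, c) for a suitable c ≤ 0, for which λ₁(X) = c and −F_∞(e₁, X) = 1.) In particular, the ∞-Laplace function F_∞ does not belong to Class M. -/
/-! The witness is `X = diag(1, t, …, t)` with `t ≤ 0` and `g t < 1`: then `X ≤ I`,
`⟨X e₁, e₁⟩ = 1` and `λ₁(X) = t`, the second diagonal entry being where `N ≥ 2` enters. -/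

open Matrix

/-- The ∞-Laplace function `F_∞(ν, X) = −⟨Xν, ν⟩`. -/
def Finfty {N : ℕ} (ν : Fin N → ℝ) (X : Matrix (Fin N) (Fin N) ℝ) : ℝ :=
  -(X.mulVec ν ⬝ᵥ ν)

theorem lam1_eq_sInf_spectrum {N : ℕ} {X : Matrix (Fin N) (Fin N) ℝ} (hX : X.IsHermitian) :
    lam1 X = sInf (spectrum ℝ X) := by
  rw [lam1, eigs, dif_pos hX, hX.spectrum_real_eq_range_eigenvalues, ← iInf]
  exact (Tuple.sort hX.eigenvalues).surjective.iInf_comp _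

theorem lam1_diagonal {N : ℕ} (d : Fin N → ℝ) : lam1 (diagonal d) = ⨅ i, d i := by
  rw [lam1_eq_sInf_spectrum (isHermitian_diagonal d), spectrum_diagonal, iInf]

theorem loewner_diagonal_one_iff {n : Type*} [Fintype n] [DecidableEq n] {d : n → ℝ} :
    Loewner (diagonal d) 1 ↔ ∀ i, d i ≤ 1 := by
  simp only [Loewner, ← diagonal_one, diagonal_sub, posSemidef_diagonal_iff, sub_nonneg]

theorem Finfty_single_one {N : ℕ} (X : Matrix (Fin N) (Fin N) ℝ) (i : Fin N) :
    Finfty (Pi.single i 1) X = -X i i := by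
  simp [Finfty, mulVec_single, dotProduct_single]

theorem ciInf_update_const {ι : Type*} [Finite ι] [DecidableEq ι] {i j : ι} (hji : j ≠ i)
    {a b : ℝ} (hab : a ≤ b) : ⨅ k, Function.update (fun _ => a) i b k = a := by
  have : Nonempty ι := ⟨i⟩
  set f := Function.update (fun _ => a) i b
  apply le_antisymm
  · simpa [f, hji] using ciInf_le (Set.finite_range f).bddBelow j
  · refine le_ciInf fun k => ?_
    rcases eq_or_ne k i with rfl | hki <;> simp [f, *]

/-- The ∞-Laplace function violates condition (3) of Class M (with `M = I`):
for any `g` unbounded below on `(−∞, 0]` there is `X ≤ I` with `−F_∞(e₁, X) > g(λ₁(X))`. -/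
theorem inftyLaplace_not_classM {N : ℕ} (hN : 2 ≤ N)
    (g : ℝ → ℝ) (hg : ∀ C : ℝ, ∃ t : ℝ, t ≤ 0 ∧ g t < C) :
    ∃ X : Matrix (Fin N) (Fin N) ℝ, X.IsHermitian ∧
      Loewner X (1 : Matrix (Fin N) (Fin N) ℝ) ∧
      -Finfty (Pi.single (⟨0, by omega⟩ : Fin N) (1 : ℝ)) X > g (lam1 X) := by
  obtain ⟨t, ht, hgt⟩ := hg 1
  have ht1 : t ≤ 1 := ht.trans zero_le_one
  set e : Fin N := ⟨0, by omega⟩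
  have hne : (⟨1, by omega⟩ : Fin N) ≠ e := by simp [e, Fin.ext_iff]
  let d : Fin N → ℝ := Function.update (fun _ => t) e 1
  refine ⟨diagonal d, isHermitian_diagonal d, loewner_diagonal_one_iff.2 fun i => ?_, ?_⟩
  · rcases eq_or_ne i e with rfl | hi <;> simp [d, *]
  · rw [Finfty_single_one, neg_neg, diagonal_apply_eq, lam1_diagonal,
      ciInf_update_const hne ht1]
    simpa [d] using hgt
end

section
/- Let N ≥ 1, let H : ℝ → ℝ be monotone increasing, and let Y, M ∈ 𝕊(N) with −Y ≤ M. Then Σ_{j=1}^{N} H(λ_j(Y)) ≥ H(λ_N(Y)) + Σ_{j=2}^{N} H(−λ_j(M)). -/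
open Matrix

open scoped RealInnerProductSpace

open Module Submodule

theorem Submodule.exists_mem_inf_ne_zero_of_finrank_lt {K V : Type*} [DivisionRing K]
    [AddCommGroup V] [Module K V] [FiniteDimensional K V] {s t : Submodule K V}
    (h : finrank K V < finrank K s + finrank K t) : ∃ v ∈ s ⊓ t, v ≠ 0 :=
  exists_mem_ne_zero_of_ne_bot fun hbot =>
    (finrank_add_finrank_le_of_disjoint (disjoint_iff.mpr hbot)).not_gt h

theorem OrthonormalBasis.finrank_span_image {𝕜 E ι : Type*} [RCLike 𝕜] [NormedAddCommGroup E]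
    [InnerProductSpace 𝕜 E] [Fintype ι] (b : OrthonormalBasis ι 𝕜 E) (s : Finset ι) :
    finrank 𝕜 (span 𝕜 (b '' s)) = s.card := by
  classical
  have hb := b.orthonormal.linearIndependent
  rw [← Finset.coe_image, finrank_span_finset_eq_card,
    Finset.card_image_of_injective _ hb.injective]
  simpa using (hb.linearIndepOn (s := (s : Set ι))).id_image

theorem OrthonormalBasis.inner_map_self_le_of_mem_span {ι E : Type*} [Fintype ι]
    [NormedAddCommGroup E] [InnerProductSpace ℝ E] {T : E →ₗ[ℝ] E} (hT : T.IsSymmetric)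
    (b : OrthonormalBasis ι ℝ E) {μ : ι → ℝ} (hb : ∀ i, T (b i) = μ i • b i) {s : Set ι} {c : ℝ}
    (hc : ∀ i ∈ s, μ i ≤ c) {v : E} (hv : v ∈ span ℝ (b '' s)) :
    ⟪v, T v⟫ ≤ c * ‖v‖ ^ 2 := by
  have hrepr : ∀ i, b.repr (T v) i = μ i * b.repr v i := fun i => by
    rw [b.repr_apply_apply, b.repr_apply_apply, ← hT, hb, real_inner_smul_left]
  have hsupp : ∀ i ∉ s, b.repr v i = 0 := fun i hi => by
    have := (b.toBasis.mem_span_image (m := v) (s := s)).1 (by simpa using hv)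
    simpa using Finsupp.notMem_support_iff.1 fun h => hi (this h)
  rw [← b.repr.inner_map_map, ← b.repr.norm_map, EuclideanSpace.norm_sq_eq, PiLp.inner_apply,
    Finset.mul_sum]
  refine Finset.sum_le_sum fun i _ => ?_
  by_cases hi : i ∈ s
  · simp only [hrepr, RCLike.inner_apply, conj_trivial, Real.norm_eq_abs, sq_abs]
    nlinarith [hc i hi, sq_nonneg (b.repr v i)]
  · simp [hsupp i hi]

namespace Matrix.IsHermitian

variable {N : ℕ} {A B : Matrix (Fin N) (Fin N) ℝ}

theorem eigs_eq (hA : A.IsHermitian) : eigs A = hA.eigenvalues ∘ Tuple.sort hA.eigenvalues :=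
  dif_pos hA

theorem monotone_eigs (hA : A.IsHermitian) : Monotone (eigs A) := by
  rw [hA.eigs_eq]
  exact Tuple.monotone_sort _

noncomputable def sortedEigenvectorBasis (hA : A.IsHermitian) :
    OrthonormalBasis (Fin N) ℝ (EuclideanSpace ℝ (Fin N)) :=
  hA.eigenvectorBasis.reindex (Tuple.sort hA.eigenvalues).symm

theorem toEuclideanLin_sortedEigenvectorBasis (hA : A.IsHermitian) (k : Fin N) :
    A.toEuclideanLin (hA.sortedEigenvectorBasis k) = eigs A k • hA.sortedEigenvectorBasis k := by
  ext i
  simpa [sortedEigenvectorBasis, hA.eigs_eq] using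
    congrFun (hA.mulVec_eigenvectorBasis (Tuple.sort hA.eigenvalues k)) i

/-- Courant–Fischer dimension count: the spans of the eigenvectors of the `j + 1` smallest
eigenvalues of `A` and of the `N - j` smallest of `B` meet in some `v ≠ 0`, and there
`0 ≤ ⟪v, (A + B) v⟫ ≤ (eigs A j + eigs B j.rev) ‖v‖²`. -/
theorem eigs_add_eigs_rev_nonneg (hA : A.IsHermitian) (hB : B.IsHermitian)
    (hAB : (A + B).PosSemidef) (j : Fin N) : 0 ≤ eigs A j + eigs B j.rev := by
  obtain ⟨v, ⟨hvA, hvB⟩, hv⟩ := exists_mem_inf_ne_zero_of_finrank_lt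
    (s := span ℝ (hA.sortedEigenvectorBasis '' (Finset.Iic j : Set (Fin N))))
    (t := span ℝ (hB.sortedEigenvectorBasis '' (Finset.Iic j.rev : Set (Fin N)))) (by
      simp only [OrthonormalBasis.finrank_span_image, Fin.card_Iic, finrank_euclideanSpace_fin,
        Fin.val_rev]
      omega)
  have hvA_le := hA.sortedEigenvectorBasis.inner_map_self_le_of_mem_span
    (isSymmetric_toEuclideanLin_iff.mpr hA) hA.toEuclideanLin_sortedEigenvectorBasis
    (fun k hk => hA.monotone_eigs (Finset.mem_Iic.mp hk)) hvA
  have hvB_le := hB.sortedEigenvectorBasis.inner_map_self_le_of_mem_span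
    (isSymmetric_toEuclideanLin_iff.mpr hB) hB.toEuclideanLin_sortedEigenvectorBasis
    (fun k hk => hB.monotone_eigs (Finset.mem_Iic.mp hk)) hvB
  have hvAB := (isPositive_toEuclideanLin_iff.mpr hAB).inner_nonneg_right v
  rw [map_add, LinearMap.add_apply, inner_add_right] at hvAB
  have hv_pos : 0 < ‖v‖ ^ 2 := by positivity
  nlinarith

end Matrix.IsHermitian

theorem Fin.sum_erase_comp_rev {N : ℕ} {β : Type*} [AddCommMonoid β] (f : Fin N → β)
    (i : Fin N) :
    ∑ j ∈ Finset.univ.erase i, f j.rev = ∑ j ∈ Finset.univ.erase i.rev, f j :=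
  Finset.sum_equiv Fin.revPerm (by simp [Fin.rev_eq_iff]) (by simp)

/-- If `H` is monotone increasing and `−Y ≤ M` in the Loewner order, then
`Σ_j H(λ_j(Y)) ≥ H(λ_N(Y)) + Σ_{j=2}^N H(−λ_j(M))`. -/
theorem sum_H_eigenvalues_super {N : ℕ} (hN : 1 ≤ N) (H : ℝ → ℝ) (hH : Monotone H)
    (Y M : Matrix (Fin N) (Fin N) ℝ) (hY : Y.IsHermitian) (hM : M.IsHermitian)
    (hYM : Loewner (-Y) M) :
    ∑ j : Fin N, H (eigs Y j) ≥
      H (eigs Y ⟨N - 1, by omega⟩) +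
        ∑ j ∈ Finset.univ.erase (⟨0, hN⟩ : Fin N), H (-(eigs M j)) := by
  have hweyl (j : Fin N) : -eigs M j ≤ eigs Y j.rev := by
    have := hM.eigs_add_eigs_rev_nonneg hY (by simpa [Loewner] using hYM) j
    linarith
  have hrev : (⟨0, hN⟩ : Fin N).rev = ⟨N - 1, by omega⟩ := by ext; simp
  calc H (eigs Y ⟨N - 1, by omega⟩) + ∑ j ∈ Finset.univ.erase ⟨0, hN⟩, H (-eigs M j)
      ≤ H (eigs Y ⟨N - 1, by omega⟩) +
          ∑ j ∈ Finset.univ.erase (⟨0, hN⟩ : Fin N), H (eigs Y j.rev) := by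
        gcongr with j
        exact hH (hweyl j)
    _ = ∑ j, H (eigs Y j) := by
        rw [Fin.sum_erase_comp_rev (fun j => H (eigs Y j)), hrev]
        exact Finset.add_sum_erase _ (fun j => H (eigs Y j)) (Finset.mem_univ _)
end

section
/- Let N ≥ 1 and let H : ℝ → ℝ be strictly increasing and bounded below. Then for every function g : ℝ → ℝ that is a strictly increasing surjection of ℝ onto ℝ, there exists X ∈ 𝕊(N) with X ≤ 0 such that Σ_{j=1}^{N} H(λ_j(X)) > g(λ₁(X)). In particular, the function F_H(X) = −Σ_{j=1}^{N} H(λ_j(X)) does not belong to Class M when H is bounded below. -/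
open Matrix

theorem Matrix.IsHermitian.eigenvalues_smul_one {n 𝕜 : Type*} [Fintype n] [DecidableEq n]
    [RCLike 𝕜] {s : ℝ} (hA : (s • 1 : Matrix n n 𝕜).IsHermitian) (i : n) :
    hA.eigenvalues i = s := by
  have : Nonempty n := ⟨i⟩
  simpa [← Algebra.algebraMap_eq_smul_one, spectrum.scalar_eq] using
    hA.eigenvalues_mem_spectrum_real i

theorem isHermitian_smul_one {n : Type*} [Fintype n] [DecidableEq n] (s : ℝ) :
    (s • 1 : Matrix n n ℝ).IsHermitian :=
  isHermitian_one.smul (IsSelfAdjoint.all s)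

theorem eigs_smul_one {N : ℕ} (s : ℝ) (j : Fin N) :
    eigs (s • 1 : Matrix (Fin N) (Fin N) ℝ) j = s := by
  rw [eigs, dif_pos (isHermitian_smul_one s), Function.comp_apply,
    IsHermitian.eigenvalues_smul_one]

theorem lam1_smul_one {N : ℕ} [NeZero N] (s : ℝ) :
    lam1 (s • 1 : Matrix (Fin N) (Fin N) ℝ) = s := by
  simp only [lam1, eigs_smul_one, ciInf_const]

theorem loewner_smul_one_zero_of_nonpos {n : Type*} [Fintype n] [DecidableEq n] {s : ℝ}
    (hs : s ≤ 0) :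
    Loewner (s • 1 : Matrix n n ℝ) 0 := by
  rw [Loewner, zero_sub, ← neg_smul]
  exact PosSemidef.one.smul (neg_nonneg.mpr hs)

theorem StrictMono.exists_neg_lt_of_surjective {g : ℝ → ℝ} (hg : StrictMono g)
    (hgs : Function.Surjective g) (B : ℝ) : ∃ s < 0, g s < B := by
  obtain ⟨s, hs⟩ := hgs (min B (g 0) - 1)
  have hlt : g s < min B (g 0) := by linarith
  exact ⟨s, hg.lt_iff_lt.mp (hlt.trans_le (min_le_right _ _)), hlt.trans_le (min_le_left _ _)⟩

theorem FH_not_classM_of_bddBelow_general {N : ℕ} (hN : 1 ≤ N) (H : ℝ → ℝ)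
    (hbdd : ∃ K : ℝ, ∀ t : ℝ, K ≤ H t) :
    ∀ g : ℝ → ℝ, StrictMono g → Function.Surjective g →
      ∃ X : Matrix (Fin N) (Fin N) ℝ, X.IsHermitian ∧
        Loewner X (0 : Matrix (Fin N) (Fin N) ℝ) ∧
        ∑ j : Fin N, H (eigs X j) > g (lam1 X) := by
  have : NeZero N := NeZero.of_pos hN
  obtain ⟨K, hK⟩ := hbdd
  intro g hg hgs
  obtain ⟨s, hs, hgs_lt⟩ := hg.exists_neg_lt_of_surjective hgs (N * K)
  refine ⟨s • 1, isHermitian_smul_one s, loewner_smul_one_zero_of_nonpos hs.le, ?_⟩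
  calc g (lam1 (s • 1 : Matrix (Fin N) (Fin N) ℝ)) = g s := by rw [lam1_smul_one]
    _ < N * K := hgs_lt
    _ ≤ N * H s := by gcongr; exact hK s
    _ = ∑ j : Fin N, H (eigs (s • 1 : Matrix (Fin N) (Fin N) ℝ) j) := by simp [eigs_smul_one]

/-- If `H` is strictly increasing and bounded below, then for every
increasing bijection `g` of `ℝ` there is `X ≤ 0` with `Σ_j H(λ_j(X)) > g(λ₁(X))`;
hence `F_H(X) = −Σ_j H(λ_j(X))` is not of Class M. -/
theorem FH_not_classM_of_bddBelow {N : ℕ} (hN : 1 ≤ N) (H : ℝ → ℝ) (hH : StrictMono H)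
    (hbdd : ∃ K : ℝ, ∀ t : ℝ, K ≤ H t) :
    ∀ g : ℝ → ℝ, StrictMono g → Function.Surjective g →
      ∃ X : Matrix (Fin N) (Fin N) ℝ, X.IsHermitian ∧
        Loewner X (0 : Matrix (Fin N) (Fin N) ℝ) ∧
        ∑ j : Fin N, H (eigs X j) > g (lam1 X) :=
  FH_not_classM_of_bddBelow_general hN H hbdd
end
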